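/- Let C̄₁, …, C̄₆ be the six closed trapezoid pairs of the frequency ring, and for S ⊂ ℝ² let per(S) = ⋃_{k∈ℤ²}(S + 2πk). Then: (a) for each j ∈ {1,…,6}, ∑_{λ∈Λ} 𝟙_{per(C̄_j)}(ξ − λ) = 1 for Lebesgue-almost every ξ ∈ ℝ², i.e. the eight Λ-translates of C̄_j tile the plane 2π-periodically up to a null set; and (b) ∑_{γ∈Γ} 𝟙_{per([−π/2,π/2]²)}(ξ − γ) = 1 for almost every ξ ∈ ℝ². -/

import Mathlib

open scoped Real
open MeasureTheory

/-- The closed frequency ring `R = [−π,π]² \ (−π/2,π/2)²`. -/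
def freqRing : Set (Fin 2 → ℝ) :=
  {ξ | (|ξ 0| ≤ π ∧ |ξ 1| ≤ π) ∧ (π / 2 ≤ |ξ 0| ∨ π / 2 ≤ |ξ 1|)}

/-- `C̄₀ = [−π/2,π/2]²` and the six closed trapezoid pairs `C̄₁, …, C̄₆` of the
frequency ring, cut by the lines through the origin of slopes `±1, ±3, ±1/3`. -/
def trapPair : Fin 7 → Set (Fin 2 → ℝ) :=
  ![{ξ | |ξ 0| ≤ π / 2 ∧ |ξ 1| ≤ π / 2},
    {ξ ∈ freqRing | |ξ 1| ≤ |ξ 0| ∧ |ξ 0| ≤ 3 * |ξ 1| ∧ ξ 0 * ξ 1 ≤ 0},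
    {ξ ∈ freqRing | 3 * |ξ 1| ≤ |ξ 0|},
    {ξ ∈ freqRing | |ξ 1| ≤ |ξ 0| ∧ |ξ 0| ≤ 3 * |ξ 1| ∧ 0 ≤ ξ 0 * ξ 1},
    {ξ ∈ freqRing | |ξ 0| ≤ |ξ 1| ∧ |ξ 1| ≤ 3 * |ξ 0| ∧ ξ 0 * ξ 1 ≤ 0},
    {ξ ∈ freqRing | 3 * |ξ 0| ≤ |ξ 1|},
    {ξ ∈ freqRing | |ξ 0| ≤ |ξ 1| ∧ |ξ 1| ≤ 3 * |ξ 0| ∧ 0 ≤ ξ 0 * ξ 1}]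

/-- The `2π`-periodization `per(S) = ⋃_{k∈ℤ²} (S + 2πk)`. -/
def periodize (S : Set (Fin 2 → ℝ)) : Set (Fin 2 → ℝ) :=
  {ξ | ∃ k : Fin 2 → ℤ, (ξ - fun i => 2 * π * (k i : ℝ)) ∈ S}

/-!
In the coordinates `w = (2/π) ξ` the lattice `Λ + 2πℤ²` becomes the checkerboard lattice
`D = {n ∈ ℤ² | n₀ + n₁ even}` and `Γ + 2πℤ²` becomes `2ℤ²`, so both claims say that a rescaled
piece has exactly one lattice translate through every point off the null set of lines
`a x + b y = k` with integer coefficients. The square `[-1, 1]²` clearly tiles by `2ℤ²`.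
A horizontal trapezoid pair is `T ∪ -T`, where `T` lies over `1 < x < 2` between the lines of
slopes `m / 3` and `(m + 2) / 3` (`m = -3, -1, 1`). Moving `-T` by the lattice vector `(3, m + 2)`
glues it onto the upper side of `T`, and the union is the sheared strip
`{1 < x < 2, m x / 3 < y < m x / 3 + 2}`, which tiles by `D` because `D` meets every vertical line
`x = n` in `n + 2ℤ`. The vertical pairs are the mirror images of the horizontal ones.
-/

open scoped Pointwise

theorem MeasureTheory.Measure.addHaar_preimage_singleton_linearMap {E : Type*}
    [NormedAddCommGroup E] [NormedSpace ℝ E] [MeasurableSpace E] [BorelSpace E]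
    [FiniteDimensional ℝ E] (μ : Measure E) [μ.IsAddHaarMeasure] {f : E →ₗ[ℝ] ℝ} (hf : f ≠ 0)
    (k : ℝ) : μ (f ⁻¹' {k}) = 0 := by
  rcases (f ⁻¹' {k}).eq_empty_or_nonempty with h | ⟨x, hx : f x = k⟩
  · simp [h]
  have hfib : f ⁻¹' {k} = (· + -x) ⁻¹' (LinearMap.ker f : Set E) := by
    ext y
    simp only [Set.mem_preimage, Set.mem_singleton_iff, SetLike.mem_coe, LinearMap.mem_ker,
      map_add, map_neg, hx, add_neg_eq_zero]
  rw [hfib, measure_preimage_add_right]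
  exact Measure.addHaar_submodule μ _ (by rwa [Ne, LinearMap.ker_eq_top])

lemma Int.existsUnique_dvd_sub_mem_Ioo {u : ℝ} (hu : ∀ m : ℤ, u ≠ m) {d : ℤ} (hd : 0 < d)
    (s : ℤ) : ∃! n : ℤ, d ∣ n - s ∧ u - d < n ∧ (n : ℝ) < u := by
  have hd' : (0 : ℝ) < d := by exact_mod_cast hd
  have hlo := Int.lt_floor_add_one ((u - s) / d)
  have hhi := Int.floor_le ((u - s) / d)
  rw [div_lt_iff₀ hd'] at hlo
  rw [le_div_iff₀ hd'] at hhi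
  refine ⟨s + d * ⌊(u - s) / d⌋, ⟨by simp, by push_cast; linarith, ?_⟩, ?_⟩
  · refine lt_of_le_of_ne (by push_cast; linarith) fun h => hu _ h.symm
  · rintro n ⟨hdvd, hn₁, hn₂⟩
    have hsub : d ∣ n - (s + d * ⌊(u - s) / d⌋) := by
      rw [← sub_sub]
      exact dvd_sub hdvd (dvd_mul_right d _)
    have habs : |n - (s + d * ⌊(u - s) / d⌋)| < d := by
      rw [abs_lt]
      constructor <;> (rw [← Int.cast_lt (R := ℝ)]; push_cast; linarith)
    linarith [Int.eq_zero_of_abs_lt_dvd hsub habs]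

noncomputable def intPoint : (Fin 2 → ℤ) →+ (Fin 2 → ℝ) := (Int.castAddHom ℝ).compLeft (Fin 2)

@[simp] lemma intPoint_apply (n : Fin 2 → ℤ) (i : Fin 2) : intPoint n i = n i := rfl

def IsGeneric (z : Fin 2 → ℝ) : Prop :=
  ∀ a b : ℤ, (a, b) ≠ 0 → ∀ k : ℤ, a * z 0 + b * z 1 ≠ k

namespace IsGeneric

variable {z : Fin 2 → ℝ}

lemma sub_intPoint (hz : IsGeneric z) (n : Fin 2 → ℤ) : IsGeneric (z - intPoint n) := by
  intro a b hab k h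
  refine hz a b hab (k + a * n 0 + b * n 1) ?_
  simp only [Pi.sub_apply, intPoint_apply] at h
  push_cast
  linarith

lemma comp_swap (hz : IsGeneric z) : IsGeneric (z ∘ Equiv.swap 0 1) := by
  intro a b hab k h
  refine hz b a (by simpa [and_comm] using hab) k ?_
  simp only [Function.comp_apply, Equiv.swap_apply_left, Equiv.swap_apply_right] at h
  linarith

end IsGeneric

lemma ae_isGeneric_smul {c : ℝ} (hc : c ≠ 0) : ∀ᵐ ξ : Fin 2 → ℝ, IsGeneric (c • ξ) := by
  let line (a b : ℤ) : (Fin 2 → ℝ) →ₗ[ℝ] ℝ :=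
    (c * a) • LinearMap.proj 0 + (c * b) • LinearMap.proj 1
  have hbad : {ξ : Fin 2 → ℝ | ¬IsGeneric (c • ξ)} ⊆
      ⋃ (p : ℤ × ℤ) (_ : p ≠ 0) (k : ℤ), line p.1 p.2 ⁻¹' {(k : ℝ)} := by
    intro ξ hξ
    simp only [IsGeneric, not_forall, not_not, Set.mem_ofPred_eq] at hξ
    obtain ⟨a, b, hab, k, h⟩ := hξ
    simp only [Set.mem_iUnion, Set.mem_preimage, Set.mem_singleton_iff]
    refine ⟨(a, b), hab, k, ?_⟩
    simp only [line, LinearMap.add_apply, LinearMap.smul_apply, LinearMap.proj_apply, smul_eq_mul]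
    simp only [Pi.smul_apply, smul_eq_mul] at h
    linarith
  refine measure_mono_null hbad (measure_iUnion_null fun p => measure_iUnion_null fun hp =>
    measure_iUnion_null fun k => Measure.addHaar_preimage_singleton_linearMap _ ?_ _)
  intro h0
  have h₀ := LinearMap.congr_fun h0 (Pi.single 0 1)
  have h₁ := LinearMap.congr_fun h0 (Pi.single 1 1)
  simp [line, hc] at h₀ h₁
  exact hp (Prod.ext h₀ h₁)

def coveringTranslates (L : Set (Fin 2 → ℤ)) (S : Set (Fin 2 → ℝ)) (z : Fin 2 → ℝ) :
    Set (Fin 2 → ℤ) :=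
  {n ∈ L | z - intPoint n ∈ S}

section coveringTranslates

variable {L : Set (Fin 2 → ℤ)} {S A B : Set (Fin 2 → ℝ)} {z : Fin 2 → ℝ}

@[simp] lemma mem_coveringTranslates {n : Fin 2 → ℤ} :
    n ∈ coveringTranslates L S z ↔ n ∈ L ∧ z - intPoint n ∈ S := Iff.rfl

lemma coveringTranslates_congr_of_isGeneric (h : ∀ w, IsGeneric w → (w ∈ A ↔ w ∈ B))
    (hz : IsGeneric z) : coveringTranslates L A z = coveringTranslates L B z := by
  ext n
  simp only [mem_coveringTranslates, h _ (hz.sub_intPoint n)]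

lemma encard_coveringTranslates_union (h : Disjoint A B) :
    (coveringTranslates L (A ∪ B) z).encard =
      (coveringTranslates L A z).encard + (coveringTranslates L B z).encard := by
  rw [← Set.encard_union_eq]
  · congr 1
    ext n
    simp only [mem_coveringTranslates, Set.mem_union, and_or_left]
  · exact Set.disjoint_left.2 fun n hA hB => h.ne_of_mem hA.2 hB.2 rfl

lemma encard_coveringTranslates_vadd (L : AddSubgroup (Fin 2 → ℤ)) {d : Fin 2 → ℤ} (hd : d ∈ L) :
    (coveringTranslates L (intPoint d +ᵥ S) z).encard = (coveringTranslates L S z).encard := by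
  have h : coveringTranslates L (intPoint d +ᵥ S) z = (· + d) ⁻¹' coveringTranslates L S z := by
    ext n
    simp only [mem_coveringTranslates, Set.mem_preimage, Set.mem_vadd_set_iff_neg_vadd_mem,
      vadd_eq_add, map_add, SetLike.mem_coe, L.add_mem_cancel_right hd]
    rw [neg_add_eq_sub, sub_sub]
  exact h ▸ Set.encard_preimage_of_bijective (Equiv.addRight d).bijective _

lemma encard_coveringTranslates_union_vadd (L : AddSubgroup (Fin 2 → ℤ)) {d : Fin 2 → ℤ}
    (hd : d ∈ L) (hAB : Disjoint A B) (hAB' : Disjoint A (intPoint d +ᵥ B)) :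
    (coveringTranslates L (A ∪ B) z).encard =
      (coveringTranslates L (A ∪ (intPoint d +ᵥ B)) z).encard := by
  rw [encard_coveringTranslates_union hAB, encard_coveringTranslates_union hAB',
    encard_coveringTranslates_vadd L hd]

lemma encard_coveringTranslates_preimage_comp_swap (hL : ∀ n, n ∘ Equiv.swap 0 1 ∈ L ↔ n ∈ L) :
    (coveringTranslates L ((· ∘ Equiv.swap 0 1) ⁻¹' S) z).encard =
      (coveringTranslates L S (z ∘ Equiv.swap 0 1)).encard := by
  have hinv : Function.Involutive (· ∘ Equiv.swap (0 : Fin 2) 1 : (Fin 2 → ℤ) → Fin 2 → ℤ) :=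
    fun n => by ext i; simp
  have h : coveringTranslates L ((· ∘ Equiv.swap 0 1) ⁻¹' S) z =
      (· ∘ Equiv.swap 0 1) ⁻¹' coveringTranslates L S (z ∘ Equiv.swap 0 1) := by
    ext n
    simp only [mem_coveringTranslates, Set.mem_preimage, hL]
    rfl
  rw [h, Set.encard_preimage_of_bijective hinv.bijective]

end coveringTranslates

def checkerboard : AddSubgroup (Fin 2 → ℤ) where
  carrier := {n | 2 ∣ n 0 + n 1}
  add_mem' {a b} ha hb := by
    simp only [Set.mem_ofPred_eq, Pi.add_apply] at *
    omega
  zero_mem' := by simp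
  neg_mem' {a} ha := by
    simp only [Set.mem_ofPred_eq, Pi.neg_apply] at *
    omega

@[simp] lemma mem_checkerboard {n : Fin 2 → ℤ} : n ∈ checkerboard ↔ 2 ∣ n 0 + n 1 := Iff.rfl

def strip (f : ℝ → ℝ) : Set (Fin 2 → ℝ) :=
  {w | 1 < w 0 ∧ w 0 < 2 ∧ f (w 0) < w 1 ∧ w 1 < f (w 0) + 2}

lemma encard_coveringTranslates_strip (f : ℝ → ℝ) {z : Fin 2 → ℝ} (h₀ : ∀ m : ℤ, z 0 ≠ m)
    (h₁ : ∀ k m : ℤ, z 1 - f (z 0 - k) ≠ m) :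
    (coveringTranslates checkerboard (strip f) z).encard = 1 := by
  obtain ⟨p, ⟨-, hp₁, hp₂⟩, hp⟩ := Int.existsUnique_dvd_sub_mem_Ioo (u := z 0 - 1)
    (fun m h => h₀ (m + 1) (by push_cast; linarith)) one_pos 0
  obtain ⟨q, ⟨hq, hq₁, hq₂⟩, hqu⟩ := Int.existsUnique_dvd_sub_mem_Ioo (h₁ p) two_pos (-p)
  push_cast at hp₁ hq₁
  refine Set.encard_eq_one.2 ⟨![p, q], Set.eq_singleton_iff_unique_mem.2 ⟨?_, ?_⟩⟩
  · simp only [mem_coveringTranslates, SetLike.mem_coe, mem_checkerboard, strip,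
      Set.mem_ofPred_eq, Pi.sub_apply, intPoint_apply, Matrix.cons_val_zero, Matrix.cons_val_one]
    refine ⟨by omega, by linarith, by linarith, by linarith, by linarith⟩
  · rintro n ⟨hn, hn₁, hn₂, hn₃, hn₄⟩
    simp only [SetLike.mem_coe, mem_checkerboard, Pi.sub_apply, intPoint_apply]
      at hn hn₁ hn₂ hn₃ hn₄
    have e₀ : n 0 = p := hp _ ⟨by simp, by push_cast; linarith, by linarith⟩
    rw [e₀] at hn hn₃ hn₄
    have e₁ : n 1 = q := hqu _ ⟨by simpa [add_comm] using hn, by push_cast; linarith, by linarith⟩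
    ext i
    fin_cases i <;> simp [e₀, e₁]

def trapezoid (m : ℤ) : Set (Fin 2 → ℝ) :=
  {w | 1 < w 0 ∧ w 0 < 2 ∧ m * w 0 < 3 * w 1 ∧ 3 * w 1 < (m + 2) * w 0}

lemma mem_trapezoid_union_vadd_neg_iff {m : ℤ} {w : Fin 2 → ℝ} (hw : IsGeneric w) :
    w ∈ trapezoid m ∪ (intPoint ![3, m + 2] +ᵥ -trapezoid m) ↔ w ∈ strip (fun x => m * x / 3) := by
  have hline : (m + 2 : ℝ) * w 0 - 3 * w 1 ≠ 0 := by
    simpa [sub_eq_add_neg] using hw (m + 2) (-3) (by simp) 0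
  simp only [trapezoid, strip, Set.mem_union, Set.mem_vadd_set_iff_neg_vadd_mem, Set.mem_neg,
    Set.mem_ofPred_eq, vadd_eq_add, neg_add_rev, neg_neg, Pi.add_apply, Pi.neg_apply,
    intPoint_apply, Matrix.cons_val_zero, Matrix.cons_val_one]
  push_cast
  constructor
  · rintro (⟨h₁, h₂, h₃, h₄⟩ | ⟨h₁, h₂, h₃, h₄⟩) <;> refine ⟨?_, ?_, ?_, ?_⟩ <;> linarith
  · rintro ⟨h₁, h₂, h₃, h₄⟩
    rcases hline.lt_or_gt with h | h
    · right; refine ⟨?_, ?_, ?_, ?_⟩ <;> linarith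
    · left; refine ⟨?_, ?_, ?_, ?_⟩ <;> linarith

lemma encard_coveringTranslates_trapezoid_union_neg {m : ℤ} (hm : Odd m) {z : Fin 2 → ℝ}
    (hz : IsGeneric z) :
    (coveringTranslates checkerboard (trapezoid m ∪ -trapezoid m) z).encard = 1 := by
  have hd : ![3, m + 2] ∈ checkerboard := by
    obtain ⟨r, rfl⟩ := hm
    simp only [mem_checkerboard, Matrix.cons_val_zero, Matrix.cons_val_one]
    omega
  have hdisj : Disjoint (trapezoid m) (-trapezoid m) :=
    Set.disjoint_left.2 fun w hw hw' => by
      simp only [trapezoid, Set.mem_neg, Set.mem_ofPred_eq, Pi.neg_apply] at hw hw'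
      linarith [hw.1, hw'.1]
  have hdisj' : Disjoint (trapezoid m) (intPoint ![3, m + 2] +ᵥ -trapezoid m) :=
    Set.disjoint_left.2 fun w hw hw' => by
      simp only [trapezoid, Set.mem_vadd_set_iff_neg_vadd_mem, Set.mem_neg, Set.mem_ofPred_eq,
        vadd_eq_add, neg_add_rev, neg_neg, Pi.add_apply, Pi.neg_apply, intPoint_apply,
        Matrix.cons_val_zero, Matrix.cons_val_one] at hw hw'
      push_cast at hw'
      linarith [hw.2.2.2, hw'.2.2.2]
  rw [encard_coveringTranslates_union_vadd checkerboard hd hdisj hdisj',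
    coveringTranslates_congr_of_isGeneric (fun w hw => mem_trapezoid_union_vadd_neg_iff hw) hz]
  refine encard_coveringTranslates_strip _ (fun k h => hz 1 0 (by simp) k (by simpa using h))
    (fun k j h => hz (-m) 3 (by simp) (3 * j - m * k) ?_)
  field_simp at h
  push_cast
  linarith

def scaledFreqRing : Set (Fin 2 → ℝ) :=
  {w | (|w 0| ≤ 2 ∧ |w 1| ≤ 2) ∧ (1 ≤ |w 0| ∨ 1 ≤ |w 1|)}

def scaledTrapPair : Fin 7 → Set (Fin 2 → ℝ) :=
  ![{w | |w 0| ≤ 1 ∧ |w 1| ≤ 1},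
    {w ∈ scaledFreqRing | |w 1| ≤ |w 0| ∧ |w 0| ≤ 3 * |w 1| ∧ w 0 * w 1 ≤ 0},
    {w ∈ scaledFreqRing | 3 * |w 1| ≤ |w 0|},
    {w ∈ scaledFreqRing | |w 1| ≤ |w 0| ∧ |w 0| ≤ 3 * |w 1| ∧ 0 ≤ w 0 * w 1},
    {w ∈ scaledFreqRing | |w 0| ≤ |w 1| ∧ |w 1| ≤ 3 * |w 0| ∧ w 0 * w 1 ≤ 0},
    {w ∈ scaledFreqRing | 3 * |w 0| ≤ |w 1|},
    {w ∈ scaledFreqRing | |w 0| ≤ |w 1| ∧ |w 1| ≤ 3 * |w 0| ∧ 0 ≤ w 0 * w 1}]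

lemma preimage_smul_trapPair (j : Fin 7) :
    (fun w => (π / 2) • w) ⁻¹' trapPair j = scaledTrapPair j := by
  -- an opaque `c = π / 2`, so that rewriting `π = c * 2` cannot loop through `π / 2`
  obtain ⟨c, hc, hπ2, hπ⟩ : ∃ c, 0 < c ∧ π / 2 = c ∧ π = c * 2 :=
    ⟨π / 2, by positivity, rfl, by ring⟩
  have hnonpos : ∀ x : ℝ, c * c * x ≤ 0 ↔ x ≤ 0 := fun x => by
    rw [← neg_nonneg, ← mul_neg, mul_nonneg_iff_of_pos_left (by positivity), neg_nonneg]
  ext w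
  fin_cases j <;>
  simp only [trapPair, freqRing, scaledTrapPair, scaledFreqRing, Fin.zero_eta, Fin.mk_one,
    Fin.reduceFinMk, Matrix.cons_val, Set.mem_preimage, Set.mem_ofPred_eq, Pi.smul_apply,
    smul_eq_mul, hπ2] <;>
  simp only [hπ, abs_mul, abs_of_pos hc, mul_mul_mul_comm c, mul_left_comm _ c,
    mul_le_mul_iff_right₀ hc, le_mul_iff_one_le_right hc, mul_le_iff_le_one_right hc,
    mul_nonneg_iff_of_pos_left (mul_pos hc hc), hnonpos]

lemma mem_scaledTrapPair_iff_of_isGeneric {w : Fin 2 → ℝ} (hw : IsGeneric w) :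
    (w ∈ scaledTrapPair 1 ↔ w ∈ trapezoid (-3) ∪ -trapezoid (-3)) ∧
    (w ∈ scaledTrapPair 2 ↔ w ∈ trapezoid (-1) ∪ -trapezoid (-1)) ∧
    (w ∈ scaledTrapPair 3 ↔ w ∈ trapezoid 1 ∪ -trapezoid 1) := by
  have hx : ∀ k : ℤ, w 0 ≠ k := fun k => by simpa using hw 1 0 (by simp) k
  have h₁ := hx 1
  have h₂ := hx (-1)
  have h₃ := hx 2
  have h₄ := hx (-2)
  have h₅ : w 0 + w 1 ≠ 0 := by simpa using hw 1 1 (by simp) 0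
  have h₆ : w 0 - w 1 ≠ 0 := by simpa [sub_eq_add_neg] using hw 1 (-1) (by simp) 0
  have h₇ : w 0 + 3 * w 1 ≠ 0 := by simpa using hw 1 3 (by simp) 0
  have h₈ : w 0 - 3 * w 1 ≠ 0 := by simpa [sub_eq_add_neg] using hw 1 (-3) (by simp) 0
  push_cast at h₁ h₂ h₃ h₄
  simp only [scaledTrapPair, scaledFreqRing, trapezoid, Matrix.cons_val, Set.mem_union,
    Set.mem_neg, Set.mem_ofPred_eq, Pi.neg_apply, mul_nonpos_iff, mul_nonneg_iff]
  rcases le_total 0 (w 0) with hx | hx <;> rcases le_total 0 (w 1) with hy | hy <;>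
    simp only [abs_of_nonneg, abs_of_nonpos, hx, hy] <;> push_cast <;> grind

lemma comp_swap_mem_scaledTrapPair_iff (w : Fin 2 → ℝ) :
    (w ∘ Equiv.swap 0 1 ∈ scaledTrapPair 1 ↔ w ∈ scaledTrapPair 4) ∧
    (w ∘ Equiv.swap 0 1 ∈ scaledTrapPair 2 ↔ w ∈ scaledTrapPair 5) ∧
    (w ∘ Equiv.swap 0 1 ∈ scaledTrapPair 3 ↔ w ∈ scaledTrapPair 6) := by
  simp only [scaledTrapPair, scaledFreqRing, Matrix.cons_val, Set.mem_ofPred_eq,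
    Function.comp_apply, Equiv.swap_apply_left, Equiv.swap_apply_right, mul_comm (w 1)]
  refine ⟨?_, ?_, ?_⟩ <;> constructor <;> rintro ⟨⟨⟨h₁, h₂⟩, h₃⟩, h₄⟩ <;>
    exact ⟨⟨⟨h₂, h₁⟩, h₃.symm⟩, h₄⟩

lemma encard_coveringTranslates_scaledTrapPair_succ (j : Fin 6) {z : Fin 2 → ℝ}
    (hz : IsGeneric z) :
    (coveringTranslates checkerboard (scaledTrapPair j.succ) z).encard = 1 := by
  have horizontal {S : Set (Fin 2 → ℝ)} {m : ℤ} (hm : Odd m)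
      (hS : ∀ w, IsGeneric w → (w ∈ S ↔ w ∈ trapezoid m ∪ -trapezoid m)) (z : Fin 2 → ℝ)
      (hz : IsGeneric z) : (coveringTranslates checkerboard S z).encard = 1 := by
    rw [coveringTranslates_congr_of_isGeneric hS hz]
    exact encard_coveringTranslates_trapezoid_union_neg hm hz
  have vertical {S S' : Set (Fin 2 → ℝ)} (hS' : ∀ w, w ∘ Equiv.swap 0 1 ∈ S ↔ w ∈ S')
      (hS : (coveringTranslates checkerboard S (z ∘ Equiv.swap 0 1)).encard = 1) :
      (coveringTranslates checkerboard S' z).encard = 1 := by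
    have hpre : (· ∘ Equiv.swap 0 1) ⁻¹' S = S' := Set.ext hS'
    rwa [← hpre, encard_coveringTranslates_preimage_comp_swap fun n => by simp [add_comm]]
  have h₁ := horizontal (by decide) fun _ hw => (mem_scaledTrapPair_iff_of_isGeneric hw).1
  have h₂ := horizontal (by decide) fun _ hw => (mem_scaledTrapPair_iff_of_isGeneric hw).2.1
  have h₃ := horizontal (by decide) fun _ hw => (mem_scaledTrapPair_iff_of_isGeneric hw).2.2
  fin_cases j
  · exact h₁ z hz
  · exact h₂ z hz
  · exact h₃ z hz
  · exact vertical (fun w => (comp_swap_mem_scaledTrapPair_iff w).1) (h₁ _ hz.comp_swap)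
  · exact vertical (fun w => (comp_swap_mem_scaledTrapPair_iff w).2.1) (h₂ _ hz.comp_swap)
  · exact vertical (fun w => (comp_swap_mem_scaledTrapPair_iff w).2.2) (h₃ _ hz.comp_swap)

def evenPoints : Set (Fin 2 → ℤ) := {n | 2 ∣ n 0 ∧ 2 ∣ n 1}

lemma encard_coveringTranslates_scaledTrapPair_zero {z : Fin 2 → ℝ} (hz : IsGeneric z) :
    (coveringTranslates evenPoints (scaledTrapPair 0) z).encard = 1 := by
  have nearest (i : Fin 2) : ∃! n : ℤ, 2 ∣ n ∧ |z i - n| ≤ 1 := by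
    have hi (m : ℤ) : z i ≠ m := by
      fin_cases i
      · simpa using hz 1 0 (by simp) m
      · simpa using hz 0 1 (by simp) m
    have hclosed (n : ℤ) : |z i - n| ≤ 1 ↔ z i + 1 - 2 < n ∧ (n : ℝ) < z i + 1 := by
      have h₁ := hi (n + 1)
      have h₂ := hi (n - 1)
      push_cast at h₁ h₂
      rw [abs_le]
      grind
    simpa [hclosed] using Int.existsUnique_dvd_sub_mem_Ioo (u := z i + 1)
      (fun m h => hi (m - 1) (by push_cast; linarith)) two_pos 0
  obtain ⟨p, hp, hpu⟩ := nearest 0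
  obtain ⟨q, hq, hqu⟩ := nearest 1
  refine Set.encard_eq_one.2 ⟨![p, q], Set.eq_singleton_iff_unique_mem.2 ⟨?_, ?_⟩⟩
  · exact ⟨⟨hp.1, hq.1⟩, hp.2, hq.2⟩
  · rintro n ⟨⟨hn₀, hn₁⟩, hn₀', hn₁'⟩
    ext i
    fin_cases i
    · exact hpu _ ⟨hn₀, hn₀'⟩
    · exact hqu _ ⟨hn₁, hn₁'⟩

lemma sum_indicator_periodize_eq_one {ι : Type*} [Fintype ι] {L : Set (Fin 2 → ℤ)}
    {μ : ι → Fin 2 → ℤ} (hμL : ∀ i (k : Fin 2 → ℤ), μ i + 4 • k ∈ L)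
    (hμ : ∀ v ∈ L, ∃! i, ∀ j, (μ i j : ZMod 4) = v j)
    {lam : ι → Fin 2 → ℝ} (hlam : ∀ i, lam i = (π / 2) • intPoint (μ i))
    {S : Set (Fin 2 → ℝ)} {ξ : Fin 2 → ℝ}
    (hξ : (coveringTranslates L ((fun w => (π / 2) • w) ⁻¹' S) ((2 / π) • ξ)).encard = 1) :
    ∑ i, (periodize S).indicator (fun _ => (1 : ℝ)) (ξ - lam i) = 1 := by
  obtain ⟨v, hv⟩ := Set.encard_eq_one.1 hξ
  obtain ⟨i₀, hi₀, hi₀u⟩ := hμ v (hv ▸ Set.mem_singleton v).1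
  have hshift (i : ι) (k : Fin 2 → ℤ) : (ξ - lam i) - (fun j => 2 * π * (k j : ℝ)) =
      (π / 2) • ((2 / π) • ξ - intPoint (μ i + 4 • k)) := by
    ext j
    simp only [hlam, Pi.sub_apply, Pi.smul_apply, smul_eq_mul, intPoint_apply, map_add, map_nsmul,
      Pi.add_apply]
    field_simp
    ring
  have hmem (i : ι) : ξ - lam i ∈ periodize S ↔ i = i₀ := by
    calc ξ - lam i ∈ periodize S
        ↔ ∃ k, μ i + 4 • k ∈ coveringTranslates L ((fun w => (π / 2) • w) ⁻¹' S) ((2 / π) • ξ) := by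
          simp only [periodize, Set.mem_ofPred_eq, hshift, mem_coveringTranslates, hμL, true_and,
            Set.mem_preimage]
      _ ↔ ∃ k, μ i + 4 • k = v := by simp only [hv, Set.mem_singleton_iff]
      _ ↔ ∀ j, (μ i j : ZMod 4) = v j := by
          simp only [ZMod.intCast_eq_intCast_iff_dvd_sub]
          constructor
          · rintro ⟨k, rfl⟩ j
            simp
          · intro h
            refine ⟨fun j => (v j - μ i j) / 4, ?_⟩
            ext j
            simp only [Pi.add_apply, Pi.smul_apply]
            rw [nsmul_eq_mul, Nat.cast_ofNat, Int.mul_ediv_cancel' (by exact_mod_cast h j)]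
            ring
      _ ↔ i = i₀ := ⟨hi₀u i, fun h => h ▸ hi₀⟩
  classical
  simp [Set.indicator_apply, hmem]

def checkerboardReps : Fin 8 → Fin 2 → ℤ :=
  ![![1, 1], ![3, 1], ![1, 3], ![3, 3], ![0, 0], ![0, 2], ![2, 0], ![2, 2]]

def evenPointsReps : Fin 4 → Fin 2 → ℤ := ![![0, 0], ![0, 2], ![2, 0], ![2, 2]]

lemma checkerboardReps_add_mem (i : Fin 8) (k : Fin 2 → ℤ) :
    checkerboardReps i + 4 • k ∈ checkerboard := by
  simp only [mem_checkerboard, Pi.add_apply, Pi.smul_apply]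
  fin_cases i <;> simp [checkerboardReps] <;> omega

lemma evenPointsReps_add_mem (i : Fin 4) (k : Fin 2 → ℤ) :
    evenPointsReps i + 4 • k ∈ evenPoints := by
  simp only [evenPoints, Set.mem_ofPred_eq, Pi.add_apply, Pi.smul_apply]
  fin_cases i <;> simp [evenPointsReps] <;> omega

lemma existsUnique_checkerboardReps_eq {v : Fin 2 → ℤ} (hv : v ∈ checkerboard) :
    ∃! i, ∀ j, (checkerboardReps i j : ZMod 4) = v j := by
  have hres : ∀ r s : ZMod 4, 2 * (r + s) = 0 →
      ∃! i, (checkerboardReps i 0 : ZMod 4) = r ∧ (checkerboardReps i 1 : ZMod 4) = s := by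
    unfold ExistsUnique
    decide
  obtain ⟨t, ht⟩ := hv
  simp only [Fin.forall_fin_two]
  refine hres _ _ ?_
  have : ((2 * (v 0 + v 1) : ℤ) : ZMod 4) = ((4 * t : ℤ) : ZMod 4) := by rw [ht]; ring_nf
  push_cast at this
  rw [this, show (4 : ZMod 4) = 0 from rfl, zero_mul]

lemma existsUnique_evenPointsReps_eq {v : Fin 2 → ℤ} (hv : v ∈ evenPoints) :
    ∃! i, ∀ j, (evenPointsReps i j : ZMod 4) = v j := by
  have hres : ∀ r s : ZMod 4, 2 * r = 0 → 2 * s = 0 →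
      ∃! i, (evenPointsReps i 0 : ZMod 4) = r ∧ (evenPointsReps i 1 : ZMod 4) = s := by
    unfold ExistsUnique
    decide
  obtain ⟨⟨a, ha⟩, ⟨b, hb⟩⟩ := hv
  simp only [Fin.forall_fin_two, ha, hb]
  refine hres _ _ ?_ ?_ <;> push_cast <;>
    rw [← mul_assoc, show (2 * 2 : ZMod 4) = 0 from rfl, zero_mul]

/-- (a) for each `j ∈ {1,…,6}`, the eight `Λ`-translates of `per(C̄_j)`
tile the plane (a.e. exactly one translate contains each point); (b) the four
`Γ`-translates of `per([−π/2,π/2]²)` do likewise. -/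
theorem stmt_12
    (lam : Fin 8 → (Fin 2 → ℝ))
    (hlam : lam = ![![π/2, π/2], ![3*π/2, π/2], ![π/2, 3*π/2], ![3*π/2, 3*π/2],
      ![0, 0], ![0, π], ![π, 0], ![π, π]])
    (gam : Fin 4 → (Fin 2 → ℝ))
    (hgam : gam = ![![0, 0], ![0, π], ![π, 0], ![π, π]]) :
    (∀ j : Fin 6, ∀ᵐ ξ : Fin 2 → ℝ,
      ∑ m : Fin 8, Set.indicator (periodize (trapPair j.succ)) (fun _ => (1 : ℝ))
        (ξ - lam m) = 1) ∧
    (∀ᵐ ξ : Fin 2 → ℝ,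
      ∑ m : Fin 4, Set.indicator (periodize (trapPair 0)) (fun _ => (1 : ℝ))
        (ξ - gam m) = 1) := by
  have hlam' (i : Fin 8) : lam i = (π / 2) • intPoint (checkerboardReps i) := by
    subst hlam
    ext j
    fin_cases i <;> fin_cases j <;> simp [checkerboardReps] <;> ring
  have hgam' (i : Fin 4) : gam i = (π / 2) • intPoint (evenPointsReps i) := by
    subst hgam
    ext j
    fin_cases i <;> fin_cases j <;> simp [evenPointsReps]
  have hae := ae_isGeneric_smul (c := 2 / π) (by positivity)
  refine ⟨fun j => ?_, ?_⟩ <;> filter_upwards [hae] with ξ hξ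
  · refine sum_indicator_periodize_eq_one checkerboardReps_add_mem
      (fun v hv => existsUnique_checkerboardReps_eq hv) hlam' ?_
    rw [preimage_smul_trapPair]
    exact encard_coveringTranslates_scaledTrapPair_succ j hξ
  · refine sum_indicator_periodize_eq_one evenPointsReps_add_mem
      (fun v hv => existsUnique_evenPointsReps_eq hv) hgam' ?_
    rw [preimage_smul_trapPair]
    exact encard_coveringTranslates_scaledTrapPair_zero hξ
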